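/- arXiv:2109.08742 — 3 statements merged into one kernel-verified Lean document; each statement's English description precedes it below -/
import Mathlib

section
/- Let n ≥ 1, α ∈ (0,1), x ∈ ℝⁿ, μ ∈ ℝⁿ, and let Σ be an n×n positive semidefinite matrix. Then every probability measure P ∈ 𝒫(μ,Σ) satisfies P{a ∈ ℝⁿ : aᵀx ≤ 0} ≥ 1 − α if and only if μᵀx + √((1−α)/α)·√(xᵀΣx) ≤ 0. -/
open MeasureTheory

noncomputable section

/-- Inner product `aᵀx` on `ℝⁿ`. -/
def dotv {n : ℕ} (a x : Fin n → ℝ) : ℝ := ∑ i, a i * x i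

/-- Mean vector of a probability measure on `ℝⁿ`. -/
def meanVec {n : ℕ} (P : Measure (Fin n → ℝ)) : Fin n → ℝ := fun i => ∫ a, a i ∂P

/-- Covariance matrix of a probability measure on `ℝⁿ`. -/
def covMat {n : ℕ} (P : Measure (Fin n → ℝ)) : Matrix (Fin n) (Fin n) ℝ :=
  Matrix.of fun i j => ∫ a, (a i - meanVec P i) * (a j - meanVec P j) ∂P

/-- Finite second moments. -/
def hasFiniteSecondMoments {n : ℕ} (P : Measure (Fin n → ℝ)) : Prop :=
  (∀ i, Integrable (fun a => a i) P) ∧ ∀ i j, Integrable (fun a => a i * a j) P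

/-- The radius function of a set `S ⊆ ℝⁿ`:
`r(x) = (1/2)·sup_{a₁,a₂ ∈ S} |a₁ᵀx − a₂ᵀx|`. -/
def radius {n : ℕ} (S : Set (Fin n → ℝ)) (x : Fin n → ℝ) : ℝ :=
  (1/2) * sSup {y | ∃ a₁ ∈ S, ∃ a₂ ∈ S, y = |dotv a₁ x - dotv a₂ x|}

/-- Sample mean of `N` samples. -/
def sampleMean {n N : ℕ} (a : Fin N → Fin n → ℝ) : Fin n → ℝ :=
  fun i => (∑ j, a j i) / N

/-- Sample covariance of `N` samples. -/
def sampleCov {n N : ℕ} (a : Fin N → Fin n → ℝ) : Matrix (Fin n) (Fin n) ℝ :=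
  Matrix.of fun i k => (∑ j, (a j i - sampleMean a i) * (a j k - sampleMean a k)) / N

/-!
Cantelli's one-sided Chebyshev inequality, `P(Y ≥ 𝔼Y + t) ≤ Var Y / (Var Y + t²)` for `t > 0`,
applied to `Y = aᵀx` (mean `μᵀx`, variance `xᵀCx`) gives `P(aᵀx > 0) ≤ α` as soon as
`√((1-α)/α) · √(xᵀCx) ≤ -μᵀx`.

Conversely Cantelli's bound is attained. Split `C = v vᵀ + DᵀD` with `vᵀx = √(xᵀCx)` and
`Dx = 0`, and let `a = μ + ζ v + W`, where `ζ` takes the value `b` with probability `1/(1+b²)` and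
`-1/b` otherwise (mean 0, variance 1) and `W`, independent of `ζ`, is uniform on the `2n` points
`±√n Dₖ`, `Dₖ` the rows of `D` (mean 0, covariance `DᵀD`, orthogonal to `x`). Then `a` has mean
`μ` and covariance `C`, and `aᵀx = μᵀx + b √(xᵀCx)` with probability `1/(1+b²)`. If
`μᵀx + √((1-α)/α) √(xᵀCx) > 0`, a `b` slightly below `√((1-α)/α)` makes this value positive and
its probability larger than `α`.
-/

open Matrix

section RealMatrix

variable {m : Type*} [Fintype m]

theorem sum_sum_mul_mul_eq_dotProduct_mulVec (C : Matrix m m ℝ) (x : m → ℝ) :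
    ∑ i, ∑ j, x i * C i j * x j = x ⬝ᵥ C *ᵥ x := by
  simp [dotProduct, mulVec, Finset.mul_sum, mul_assoc]

theorem Matrix.dotProduct_transpose_mul_mulVec {R l : Type*} [CommSemiring R] [Fintype l]
    (B : Matrix l m R) (u v : m → R) :
    u ⬝ᵥ (Bᵀ * B) *ᵥ v = B *ᵥ u ⬝ᵥ B *ᵥ v := by
  rw [← mulVec_mulVec, dotProduct_mulVec, vecMul_transpose]

namespace Matrix.PosSemidef

variable {C : Matrix m m ℝ}

open scoped MatrixOrder in
theorem exists_eq_transpose_mul_self (hC : C.PosSemidef) : ∃ B : Matrix m m ℝ, C = Bᵀ * B := by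
  classical
  obtain ⟨B, rfl⟩ := CStarAlgebra.nonneg_iff_eq_star_mul_self.mp hC.nonneg
  exact ⟨B, by simp [star_eq_conjTranspose]⟩

theorem sq_dotProduct_mulVec_le (hC : C.PosSemidef) (x y : m → ℝ) :
    (y ⬝ᵥ C *ᵥ x) ^ 2 ≤ (y ⬝ᵥ C *ᵥ y) * (x ⬝ᵥ C *ᵥ x) := by
  obtain ⟨B, rfl⟩ := hC.exists_eq_transpose_mul_self
  simp only [dotProduct_transpose_mul_mulVec]
  simpa only [dotProduct, sq] using Finset.sum_mul_sq_le_sq_mul_sq Finset.univ (B *ᵥ y) (B *ᵥ x)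

theorem exists_eq_vecMulVec_add_transpose_mul (hC : C.PosSemidef) (x : m → ℝ) :
    ∃ (v : m → ℝ) (D : Matrix m m ℝ),
      C = vecMulVec v v + Dᵀ * D ∧ D *ᵥ x = 0 ∧ v ⬝ᵥ x = √(x ⬝ᵥ C *ᵥ x) := by
  set S := x ⬝ᵥ C *ᵥ x
  have hS : 0 ≤ S := by simpa using hC.dotProduct_mulVec_nonneg x
  set σ := √S
  have hσ : σ ^ 2 = S := Real.sq_sqrt hS
  -- for `σ = 0` this is `v = 0`, since `0⁻¹ = 0`
  set v := σ⁻¹ • C *ᵥ x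
  have hyv (y : m → ℝ) : y ⬝ᵥ v = σ⁻¹ * (y ⬝ᵥ C *ᵥ x) := by simp [v, dotProduct_smul]
  have hvx : v ⬝ᵥ x = σ := by
    rw [dotProduct_comm, hyv, show x ⬝ᵥ C *ᵥ x = σ ^ 2 from hσ.symm]
    rcases eq_or_ne σ 0 with h | h <;> field_simp [h]
  have hM : (C - vecMulVec v v).PosSemidef := by
    refine .of_dotProduct_mulVec_nonneg (hC.1.sub ?_) fun y => ?_
    · simpa using posSemidef_vecMulVec_self_star v |>.1
    · have hCS := hC.sq_dotProduct_mulVec_le x y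
      have hy : 0 ≤ y ⬝ᵥ C *ᵥ y := by simpa using hC.dotProduct_mulVec_nonneg y
      have hσσ : σ⁻¹ ^ 2 * S ≤ 1 := by
        rw [← hσ, ← mul_pow]; exact pow_le_one₀ (by positivity) (inv_mul_le_one)
      simp only [star_trivial, sub_mulVec, dotProduct_sub, vecMulVec_mulVec, op_smul_eq_smul,
        dotProduct_smul, smul_eq_mul, dotProduct_comm v y, hyv]
      nlinarith [mul_le_mul_of_nonneg_left hCS (sq_nonneg σ⁻¹), mul_le_mul_of_nonneg_left hσσ hy]
  obtain ⟨D, hD⟩ := hM.exists_eq_transpose_mul_self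
  refine ⟨v, D, by rw [← hD, add_sub_cancel], ?_, hvx⟩
  have hxDx : D *ᵥ x ⬝ᵥ D *ᵥ x = 0 := by
    rw [← dotProduct_transpose_mul_mulVec, ← hD, sub_mulVec, dotProduct_sub, vecMulVec_mulVec,
      op_smul_eq_smul, dotProduct_smul, smul_eq_mul, dotProduct_comm x v, hvx, ← sq, hσ, sub_self]
  exact dotProduct_self_eq_zero.mp hxDx

end Matrix.PosSemidef

end RealMatrix

section Moments

open ProbabilityTheory

variable {n : ℕ} {P : Measure (Fin n → ℝ)}

theorem dotv_eq_dotProduct (a x : Fin n → ℝ) : dotv a x = a ⬝ᵥ x := rfl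

theorem measurable_dotv (x : Fin n → ℝ) : Measurable fun a : Fin n → ℝ => dotv a x := by
  unfold dotv; fun_prop

theorem hasFiniteSecondMoments.memLp_eval (hP : hasFiniteSecondMoments P) (i : Fin n) :
    MemLp (fun a => a i) 2 P :=
  (memLp_two_iff_integrable_sq (measurable_pi_apply i).aestronglyMeasurable).2 <| by
    simpa only [sq] using hP.2 i i

theorem hasFiniteSecondMoments.memLp_dotv (hP : hasFiniteSecondMoments P) (x : Fin n → ℝ) :
    MemLp (fun a => dotv a x) 2 P :=
  memLp_finsetSum _ fun i _ => (hP.memLp_eval i).mul_const (x i)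

theorem hasFiniteSecondMoments.integral_dotv (hP : hasFiniteSecondMoments P) (x : Fin n → ℝ) :
    ∫ a, dotv a x ∂P = dotv (meanVec P) x := by
  simp only [dotv]
  rw [integral_finsetSum _ fun i _ => (hP.1 i).mul_const (x i)]
  simp only [integral_mul_const, meanVec]

theorem hasFiniteSecondMoments.variance_dotv [IsProbabilityMeasure P]
    (hP : hasFiniteSecondMoments P) (x : Fin n → ℝ) :
    Var[fun a => dotv a x; P] = x ⬝ᵥ covMat P *ᵥ x := by
  rw [← sum_sum_mul_mul_eq_dotProduct_mulVec]
  simp only [dotv]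
  rw [variance_fun_sum fun i => (hP.memLp_eval i).mul_const (x i)]
  refine Finset.sum_congr rfl fun i _ => Finset.sum_congr rfl fun j _ => ?_
  rw [covariance_mul_const_left, covariance_mul_const_right]
  simp only [covMat, Matrix.of_apply, covariance, meanVec]
  ring

end Moments

namespace ProbabilityTheory

variable {Ω : Type*} {mΩ : MeasurableSpace Ω} {μ : Measure Ω} [IsProbabilityMeasure μ]
  {X : Ω → ℝ}

theorem measureReal_ge_le_variance_div_add_sq (hX : MemLp X 2 μ) {t : ℝ} (ht : 0 < t) :
    μ.real {ω | μ[X] + t ≤ X ω} ≤ Var[X; μ] / (Var[X; μ] + t ^ 2) := by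
  set V := Var[X; μ]
  have hV : 0 ≤ V := variance_nonneg X μ
  -- Markov's inequality for `(X - 𝔼X + u)²`, with the optimal shift `u`
  set u := V / t
  set W := fun ω => X ω + (u - μ[X])
  have hW : MemLp W 2 μ := hX.add (memLp_const _)
  have hW_mean : μ[W] = u := by
    simp only [W]
    rw [integral_add (hX.integrable one_le_two) (integrable_const _), integral_const]
    simp
  have hW_var : Var[W; μ] = V := variance_add_const hX.aestronglyMeasurable _
  have hW_sq : ∫ ω, W ω ^ 2 ∂μ = V + u ^ 2 := by
    have := variance_eq_sub hW
    simp only [hW_var, hW_mean, Pi.pow_apply] at this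
    linarith
  have hsub : {ω | μ[X] + t ≤ X ω} ⊆ {ω | (t + u) ^ 2 ≤ W ω ^ 2} := by
    intro ω (hω : μ[X] + t ≤ X ω)
    have htW : t + u ≤ W ω := by simp only [W]; linarith
    exact pow_le_pow_left₀ (by positivity) htW 2
  have hmarkov := mul_meas_ge_le_integral_of_nonneg (f := fun ω => W ω ^ 2)
    (ae_of_all _ fun ω => sq_nonneg (W ω)) hW.integrable_sq ((t + u) ^ 2)
  rw [hW_sq] at hmarkov
  calc μ.real {ω | μ[X] + t ≤ X ω}
      ≤ μ.real {ω | (t + u) ^ 2 ≤ W ω ^ 2} := measureReal_mono hsub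
    _ ≤ (V + u ^ 2) / (t + u) ^ 2 := by rw [le_div_iff₀ (by positivity)]; linarith
    _ = V / (V + t ^ 2) := by simp only [u]; field_simp; ring

theorem ofReal_one_sub_le_measure_nonpos (hX : MemLp X 2 μ) {α : ℝ} (hα : α ∈ Set.Ioo 0 1)
    (h : μ[X] + √((1 - α) / α) * √Var[X; μ] ≤ 0) :
    ENNReal.ofReal (1 - α) ≤ μ {ω | X ω ≤ 0} := by
  obtain ⟨hα0, hα1⟩ := hα
  set V := Var[X; μ]
  set m := μ[X]
  have hV : 0 ≤ V := variance_nonneg X μ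
  have hβ : 0 < √((1 - α) / α) := Real.sqrt_pos.2 (div_pos (by linarith) hα0)
  have hpos : μ {ω | 0 < X ω} ≤ ENNReal.ofReal α := by
    rcases (show m ≤ 0 by nlinarith [Real.sqrt_nonneg V]).lt_or_eq with hm | hm
    · have hβV : (1 - α) / α * V ≤ m ^ 2 := by
        have := pow_le_pow_left₀ (by positivity) (show √((1 - α) / α) * √V ≤ -m by linarith) 2
        rwa [mul_pow, Real.sq_sqrt (by positivity), Real.sq_sqrt hV, neg_sq] at this
      have hVα : V / (V + (-m) ^ 2) ≤ α := by
        rw [div_le_iff₀ (by nlinarith)]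
        rw [div_mul_eq_mul_div, div_le_iff₀ hα0] at hβV
        nlinarith
      calc μ {ω | 0 < X ω} ≤ μ {ω | m + -m ≤ X ω} := measure_mono fun ω hω => by
            simp only [Set.mem_ofPred_eq, add_neg_cancel] at hω ⊢; exact hω.le
        _ = ENNReal.ofReal (μ.real {ω | m + -m ≤ X ω}) := (ofReal_measureReal).symm
        _ ≤ ENNReal.ofReal α := ENNReal.ofReal_le_ofReal <|
          (measureReal_ge_le_variance_div_add_sq hX (by linarith)).trans hVα
    · have hV0 : V = 0 :=
        (Real.sqrt_eq_zero hV).1 (le_antisymm (by nlinarith) (Real.sqrt_nonneg V))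
      have hae := ae_eq_integral_of_variance_eq_zero hX hV0
      rw [measure_eq_zero_iff_ae_notMem.2]
      · exact zero_le
      · filter_upwards [hae] with ω hω
        rw [hω, not_lt]
        exact hm.le
  -- `{ω | X ω ≤ 0}` need not be measurable, so only subadditivity is available
  have hsplit := measure_univ_le_add_compl {ω | X ω ≤ 0} (μ := μ)
  rw [measure_univ, show {ω | X ω ≤ 0}ᶜ = {ω | 0 < X ω} by ext; simp] at hsplit
  rw [ENNReal.ofReal_sub _ hα0.le, ENNReal.ofReal_one, tsub_le_iff_right]
  exact hsplit.trans (by gcongr)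

end ProbabilityTheory

section AtomicMeasure

variable {α ι : Type*} [MeasurableSpace α] [Fintype ι] {w : ι → ℝ} {p : ι → α}

def atomicMeasure (w : ι → ℝ) (p : ι → α) : Measure α :=
  ∑ i, ENNReal.ofReal (w i) • Measure.dirac (p i)

theorem isProbabilityMeasure_atomicMeasure (hw : 0 ≤ w) (h1 : ∑ i, w i = 1) :
    IsProbabilityMeasure (atomicMeasure w p) := by
  constructor
  simp [atomicMeasure, Measure.finsetSum_apply, ← ENNReal.ofReal_sum_of_nonneg fun i _ => hw i, h1]

theorem ofReal_sum_le_atomicMeasure_apply (hw : 0 ≤ w) {s : Set α} {t : Finset ι}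
    (hts : ∀ i ∈ t, p i ∈ s) : ENNReal.ofReal (∑ i ∈ t, w i) ≤ atomicMeasure w p s := by
  rw [ENNReal.ofReal_sum_of_nonneg fun i _ => hw i, atomicMeasure, Measure.coe_finsetSum,
    Finset.sum_apply]
  calc ∑ i ∈ t, ENNReal.ofReal (w i)
      = ∑ i ∈ t, (ENNReal.ofReal (w i) • Measure.dirac (p i)) s := by
        refine Finset.sum_congr rfl fun i hi => ?_
        rw [Measure.smul_apply, Measure.dirac_apply_of_mem (hts i hi), smul_eq_mul, mul_one]
    _ ≤ _ := Finset.sum_le_sum_of_subset (Finset.subset_univ t)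

variable [MeasurableSingletonClass α]

theorem integrable_atomicMeasure (f : α → ℝ) : Integrable f (atomicMeasure w p) :=
  integrable_finsetSum_measure.2 fun _ _ =>
    (integrable_dirac enorm_lt_top).smul_measure ENNReal.ofReal_ne_top

theorem integral_atomicMeasure (hw : 0 ≤ w) (f : α → ℝ) :
    ∫ a, f a ∂atomicMeasure w p = ∑ i, w i * f (p i) := by
  rw [atomicMeasure, integral_finsetSum_measure fun _ _ =>
    (integrable_dirac enorm_lt_top).smul_measure ENNReal.ofReal_ne_top]
  refine Finset.sum_congr rfl fun i _ => ?_
  rw [integral_smul_measure, integral_dirac, ENNReal.toReal_ofReal (hw i), smul_eq_mul]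

end AtomicMeasure

section IndependentSum

variable {n : ℕ} {ι κ : Type*} [Fintype ι] [Fintype κ] {q : ι → ℝ} {r : κ → ℝ}
  {X : ι → Fin n → ℝ} {Y : κ → Fin n → ℝ}

theorem meanVec_atomicMeasure_add (hq : 0 ≤ q) (hr : 0 ≤ r) (hq1 : ∑ i, q i = 1)
    (hr1 : ∑ k, r k = 1) (hX : ∑ i, q i • X i = 0) (hY : ∑ k, r k • Y k = 0) (μ : Fin n → ℝ) :
    meanVec (atomicMeasure (fun i : ι × κ => q i.1 * r i.2) fun i => μ + X i.1 + Y i.2) = μ := by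
  ext j
  have hXj : ∑ i, q i * X i j = 0 := by simpa using congrFun hX j
  have hYj : ∑ k, r k * Y k j = 0 := by simpa using congrFun hY j
  rw [meanVec, integral_atomicMeasure (fun i => mul_nonneg (hq _) (hr _)), Fintype.sum_prod_type]
  calc ∑ i, ∑ k, q i * r k * (μ + X i + Y k) j
      = ∑ i, ∑ k, (q i * r k * μ j + q i * X i j * r k + q i * (r k * Y k j)) := by
        refine Finset.sum_congr rfl fun i _ => Finset.sum_congr rfl fun k _ => ?_
        simp only [Pi.add_apply]; ring
    _ = μ j := by
        simp only [Finset.sum_add_distrib, ← Finset.mul_sum, ← Finset.sum_mul, hq1, hr1, hXj, hYj]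
        ring

theorem covMat_atomicMeasure_add (hq : 0 ≤ q) (hr : 0 ≤ r) (hq1 : ∑ i, q i = 1)
    (hr1 : ∑ k, r k = 1) (hX : ∑ i, q i • X i = 0) (hY : ∑ k, r k • Y k = 0) (μ : Fin n → ℝ) :
    covMat (atomicMeasure (fun i : ι × κ => q i.1 * r i.2) fun i => μ + X i.1 + Y i.2) =
      ∑ i, q i • vecMulVec (X i) (X i) + ∑ k, r k • vecMulVec (Y k) (Y k) := by
  ext j l
  have hXj (j) : ∑ i, q i * X i j = 0 := by simpa using congrFun hX j
  have hYj (j) : ∑ k, r k * Y k j = 0 := by simpa using congrFun hY j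
  rw [covMat, Matrix.of_apply, meanVec_atomicMeasure_add hq hr hq1 hr1 hX hY,
    integral_atomicMeasure (fun i => mul_nonneg (hq _) (hr _)), Fintype.sum_prod_type]
  calc ∑ i, ∑ k, q i * r k * (((μ + X i + Y k) j - μ j) * ((μ + X i + Y k) l - μ l))
      = ∑ i, ∑ k, (q i * (X i j * X i l) * r k + q i * X i j * (r k * Y k l)
          + q i * X i l * (r k * Y k j) + q i * (r k * (Y k j * Y k l))) := by
        refine Finset.sum_congr rfl fun i _ => Finset.sum_congr rfl fun k _ => ?_
        simp only [Pi.add_apply]; ring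
    _ = _ := by
        simp only [Finset.sum_add_distrib, ← Finset.mul_sum, ← Finset.sum_mul, hq1, hr1, hXj, hYj]
        simp [Matrix.sum_apply, vecMulVec_apply]

end IndependentSum

section TwoPointLaw

variable {n : ℕ} {b : ℝ}

def twoPointWeight (b : ℝ) (s : Bool) : ℝ := if s then 1 / (1 + b ^ 2) else b ^ 2 / (1 + b ^ 2)

def twoPointValue (b : ℝ) (s : Bool) : ℝ := if s then b else -b⁻¹

theorem twoPointWeight_nonneg (b : ℝ) : 0 ≤ twoPointWeight b := fun s => by
  cases s <;> simp only [twoPointWeight, Bool.false_eq_true, if_true, if_false] <;> positivity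

theorem sum_twoPointWeight (b : ℝ) : ∑ s, twoPointWeight b s = 1 := by
  rw [Fintype.sum_bool]
  simp only [twoPointWeight, if_true, Bool.false_eq_true, if_false]
  field_simp

theorem sum_twoPointWeight_smul_twoPointValue_smul (hb : b ≠ 0) (v : Fin n → ℝ) :
    ∑ s, twoPointWeight b s • twoPointValue b s • v = 0 := by
  have h : ∑ s, twoPointWeight b s * twoPointValue b s = 0 := by
    rw [Fintype.sum_bool]
    simp only [twoPointWeight, twoPointValue, if_true, Bool.false_eq_true, if_false]
    field_simp
    ring
  simp only [smul_smul, ← Finset.sum_smul, h, zero_smul]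

theorem sum_twoPointWeight_smul_vecMulVec (hb : b ≠ 0) (v : Fin n → ℝ) :
    ∑ s, twoPointWeight b s • vecMulVec (twoPointValue b s • v) (twoPointValue b s • v) =
      vecMulVec v v := by
  have h : ∑ s, twoPointWeight b s * (twoPointValue b s * twoPointValue b s) = 1 := by
    rw [Fintype.sum_bool]
    simp only [twoPointWeight, twoPointValue, if_true, Bool.false_eq_true, if_false]
    field_simp
    ring
  simp only [smul_vecMulVec, vecMulVec_smul, smul_smul, ← Finset.sum_smul, h, one_smul]

end TwoPointLaw

section SignedRows

variable {n : ℕ}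

def signedRows (D : Matrix (Fin n) (Fin n) ℝ) (k : Fin n × Bool) : Fin n → ℝ :=
  (if k.2 then √n else -√n) • D k.1

theorem sum_smul_signedRows (D : Matrix (Fin n) (Fin n) ℝ) :
    ∑ k, (1 / (2 * n) : ℝ) • signedRows D k = 0 := by
  rw [Fintype.sum_prod_type]
  refine Finset.sum_eq_zero fun k _ => ?_
  rw [Fintype.sum_bool]
  simp only [signedRows, if_true, Bool.false_eq_true, if_false, neg_smul, smul_neg, add_neg_cancel]

theorem sum_smul_vecMulVec_signedRows (hn : 0 < n) (D : Matrix (Fin n) (Fin n) ℝ) :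
    ∑ k, (1 / (2 * n) : ℝ) • vecMulVec (signedRows D k) (signedRows D k) = Dᵀ * D := by
  ext i j
  simp only [Matrix.sum_apply, Fintype.sum_prod_type, Fintype.sum_bool, signedRows, if_true,
    Bool.false_eq_true, if_false, Matrix.smul_apply, vecMulVec_apply, Pi.smul_apply,
    smul_eq_mul, mul_apply, transpose_apply]
  refine Finset.sum_congr rfl fun k _ => ?_
  have hsq : √(n : ℝ) * √n = n := Real.mul_self_sqrt n.cast_nonneg
  field_simp
  linear_combination 2 * D k i * D k j * hsq

theorem signedRows_dotProduct {D : Matrix (Fin n) (Fin n) ℝ} {x : Fin n → ℝ} (hD : D *ᵥ x = 0)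
    (k : Fin n × Bool) : signedRows D k ⬝ᵥ x = 0 := by
  rw [signedRows, smul_dotProduct, show D k.1 ⬝ᵥ x = 0 from congrFun hD k.1, smul_zero]

end SignedRows

theorem exists_meanVec_covMat_ofReal_le_measure_dotv_eq {n : ℕ} (hn : 0 < n) (μ x v : Fin n → ℝ)
    {D : Matrix (Fin n) (Fin n) ℝ} (hD : D *ᵥ x = 0) {b : ℝ} (hb : 0 < b) :
    ∃ P : Measure (Fin n → ℝ), IsProbabilityMeasure P ∧ hasFiniteSecondMoments P ∧
      meanVec P = μ ∧ covMat P = vecMulVec v v + Dᵀ * D ∧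
      ENNReal.ofReal (1 / (1 + b ^ 2)) ≤ P {a | dotv a x = dotv μ x + b * (v ⬝ᵥ x)} := by
  set q := twoPointWeight b
  set r : Fin n × Bool → ℝ := fun _ => 1 / (2 * n)
  have hq := twoPointWeight_nonneg b
  have hr : 0 ≤ r := fun _ => by positivity
  have hr1 : ∑ k, r k = 1 := by
    simp only [r, Finset.sum_const, Finset.card_univ, Fintype.card_prod, Fintype.card_fin,
      Fintype.card_bool, nsmul_eq_mul, Nat.cast_mul, Nat.cast_ofNat]
    field_simp
  have hX := sum_twoPointWeight_smul_twoPointValue_smul hb.ne' v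
  have hY := sum_smul_signedRows D
  have hw : 0 ≤ fun i : Bool × (Fin n × Bool) => q i.1 * r i.2 :=
    fun i => mul_nonneg (hq i.1) (hr i.2)
  refine ⟨atomicMeasure (fun i : Bool × (Fin n × Bool) => q i.1 * r i.2)
      fun i => μ + twoPointValue b i.1 • v + signedRows D i.2,
    isProbabilityMeasure_atomicMeasure hw ?_,
    ⟨fun _ => integrable_atomicMeasure _, fun _ _ => integrable_atomicMeasure _⟩,
    meanVec_atomicMeasure_add hq hr (sum_twoPointWeight b) hr1 hX hY μ, ?_, ?_⟩
  · rw [Fintype.sum_prod_type, ← Fintype.sum_mul_sum, sum_twoPointWeight, hr1, one_mul]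
  · rw [covMat_atomicMeasure_add hq hr (sum_twoPointWeight b) hr1 hX hY μ,
      sum_twoPointWeight_smul_vecMulVec hb.ne', sum_smul_vecMulVec_signedRows hn]
  · convert ofReal_sum_le_atomicMeasure_apply hw (t := {true} ×ˢ Finset.univ) ?_ using 2
    · simp only [Finset.sum_product, Finset.sum_singleton, ← Finset.mul_sum, hr1, mul_one, q,
        twoPointWeight, if_true]
    · rintro ⟨s, k⟩ hs
      obtain rfl : s = true := by simpa using hs
      simp only [Set.mem_ofPred_eq, dotv_eq_dotProduct, add_dotProduct, smul_dotProduct,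
        signedRows_dotProduct hD, twoPointValue, if_true, smul_eq_mul, add_zero]

open Filter Topology in
theorem exists_meanVec_covMat_measure_dotv_nonpos_lt {n : ℕ} (hn : 0 < n) {α : ℝ}
    (hα : α ∈ Set.Ioo 0 1) {μ x : Fin n → ℝ} {C : Matrix (Fin n) (Fin n) ℝ} (hC : C.PosSemidef)
    (h : 0 < dotv μ x + √((1 - α) / α) * √(x ⬝ᵥ C *ᵥ x)) :
    ∃ P : Measure (Fin n → ℝ), IsProbabilityMeasure P ∧ hasFiniteSecondMoments P ∧
      meanVec P = μ ∧ covMat P = C ∧ P {a | dotv a x ≤ 0} < ENNReal.ofReal (1 - α) := by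
  obtain ⟨hα0, hα1⟩ := hα
  set β := √((1 - α) / α)
  set σ := √(x ⬝ᵥ C *ᵥ x)
  have hβ : 0 < β := Real.sqrt_pos.2 (div_pos (by linarith) hα0)
  obtain ⟨b, ⟨hbσ, hb0⟩, hbβ⟩ : ∃ b, (0 < dotv μ x + b * σ ∧ 0 < b) ∧ b < β := by
    have hcont : Tendsto (fun b => dotv μ x + b * σ) (𝓝[<] β) (𝓝 (dotv μ x + β * σ)) :=
      ((continuous_const.add (continuous_id.mul continuous_const)).tendsto β).mono_left
        nhdsWithin_le_nhds
    exact ((hcont.eventually (eventually_gt_nhds h)).and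
      (eventually_nhdsWithin_of_eventually_nhds (eventually_gt_nhds hβ))).and
      eventually_mem_nhdsWithin |>.exists
  have hαb : α < 1 / (1 + b ^ 2) := by
    have hb2 : b ^ 2 < (1 - α) / α := by
      rw [← Real.sq_sqrt (div_pos (by linarith) hα0).le]
      exact pow_lt_pow_left₀ hbβ hb0.le two_ne_zero
    rw [lt_div_iff₀ hα0] at hb2
    rw [lt_div_iff₀ (by positivity)]
    nlinarith
  obtain ⟨v, D, hCvD, hDx, hvx⟩ := hC.exists_eq_vecMulVec_add_transpose_mul x
  obtain ⟨P, hP, hPm, hmean, hcov, hatom⟩ :=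
    exists_meanVec_covMat_ofReal_le_measure_dotv_eq hn μ x v hDx hb0
  refine ⟨P, hP, hPm, hmean, hcov.trans hCvD.symm, ?_⟩
  rw [hvx, ENNReal.ofReal_le_iff_le_toReal (measure_ne_top _ _), ← measureReal_def] at hatom
  have hB : P.real {a | dotv a x = dotv μ x + b * σ} ≤ P.real {a | dotv a x ≤ 0}ᶜ :=
    measureReal_mono fun a (ha : dotv a x = _) => by
      rw [Set.mem_compl_iff, Set.mem_ofPred_eq, ha, not_le]; linarith
  rw [probReal_compl_eq_one_sub (measurableSet_le (measurable_dotv x) measurable_const)] at hB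
  rw [← ofReal_measureReal, ENNReal.ofReal_lt_ofReal_iff (by linarith)]
  linarith

/-- Lemma 3.1 of Calafiore–El Ghaoui / El Ghaoui et al.:
for `α ∈ (0,1)`, every probability measure with mean `μ` and covariance `C`
satisfies `P{a : aᵀx ≤ 0} ≥ 1 − α` iff `μᵀx + √((1−α)/α)·√(xᵀCx) ≤ 0`. -/
theorem stmt0 {n : ℕ} (hn : 1 ≤ n) (α : ℝ) (hα : α ∈ Set.Ioo (0:ℝ) 1)
    (x μ : Fin n → ℝ) (C : Matrix (Fin n) (Fin n) ℝ) (hC : C.PosSemidef) :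
    (∀ (P : Measure (Fin n → ℝ)), IsProbabilityMeasure P → hasFiniteSecondMoments P →
      meanVec P = μ → covMat P = C →
      ENNReal.ofReal (1 - α) ≤ P {a | dotv a x ≤ 0}) ↔
    dotv μ x + Real.sqrt ((1 - α) / α) * Real.sqrt (∑ i, ∑ j, x i * C i j * x j) ≤ 0 := by
  rw [sum_sum_mul_mul_eq_dotProduct_mulVec]
  constructor
  · intro h
    by_contra! hfail
    obtain ⟨P, hP, hPm, hmean, hcov, hlt⟩ :=
      exists_meanVec_covMat_measure_dotv_nonpos_lt hn hα hC hfail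
    exact (h P hP hPm hmean hcov).not_gt hlt
  · intro h P hP hPm hmean hcov
    refine ProbabilityTheory.ofReal_one_sub_le_measure_nonpos (hPm.memLp_dotv x) hα ?_
    rwa [hPm.integral_dotv, hPm.variance_dotv, hmean, hcov]
end
end

section
/- Let ε, δ ∈ (0,1), c ∈ ℝ, μ* ∈ ℝ, σ*² ≥ 0, and v̲* ≤ v̄* in ℝ. Define G := {(μ, σ²) ∈ ℝ² : every probability measure P' on ℝ with mean μ, variance σ², and support contained in [v̲*, v̄*] satisfies P'{v : v + c ≤ 0} ≥ 1 − ε}. Let (Ω, 𝔽, ℚ) be a probability space and let Q : Ω → Set(ℝ²) be such that for ℚ-almost every ω one has Q(ω) ⊆ G, and ℚ{ω : (μ*, σ*²) ∈ Q(ω)} ≥ 1 − δ. Then every probability measure P on ℝ with mean μ*, variance σ*², and support contained in [v̲*, v̄*] satisfies (ℚ ⊗ P){(ω, v) : v + c ≤ 0} ≥ (1 − ε)·(1 − δ). -/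
open MeasureTheory

noncomputable section

/-- Mean of a probability measure on `ℝ`. -/
def mean1 (P : Measure ℝ) : ℝ := ∫ v, v ∂P

/-- Variance of a probability measure on `ℝ`. -/
def var1 (P : Measure ℝ) : ℝ := ∫ v, (v - mean1 P) ^ 2 ∂P

/-!
On the confidence event `A = {ω | (μ*, σ*²) ∈ Q ω}` the region `Q ω` lies almost surely in `G`,
and `A` has positive probability, so the true moments `(μ*, σ*²)` lie in `G` and hence
`P {v | v + c ≤ 0} ≥ 1 - ε`. The event `{v + c ≤ 0}` under `ℚ ⊗ P` contains the rectangle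
`A × {v + c ≤ 0}`, whose measure is `ℚ A · P {v + c ≤ 0} ≥ (1 - δ)(1 - ε)`.
-/

theorem mem_of_ae_subset_of_measure_ne_zero {Ω α : Type*} [MeasurableSpace Ω] {μ : Measure Ω}
    {Q : Ω → Set α} {G : Set α} {x : α} (hsub : ∀ᵐ ω ∂μ, Q ω ⊆ G)
    (hx : μ {ω | x ∈ Q ω} ≠ 0) : x ∈ G := by
  obtain ⟨ω, hxω, hωG⟩ := ((frequently_ae_iff.mpr hx).and_eventually hsub).exists
  exact hωG hxω

theorem MeasureTheory.Measure.mul_le_prod_preimage_snd {α β : Type*}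
    [MeasurableSpace α] [MeasurableSpace β]
    (μ : Measure α) (ν : Measure β) [SFinite ν] (A : Set α) (B : Set β) :
    μ A * ν B ≤ μ.prod ν {p | p.2 ∈ B} := by
  rw [← Measure.prod_prod]
  exact measure_mono fun p hp => hp.2

theorem stmt3_general {Ω : Type*} [MeasurableSpace Ω] (ε δ c μstar σ2star vlo vhi : ℝ)
    (hδ : δ ∈ Set.Ioo (0:ℝ) 1)
    (QQ : Measure Ω) (Qset : Ω → Set (ℝ × ℝ))
    (G : Set (ℝ × ℝ))
    (hG : G = {q : ℝ × ℝ | ∀ (P' : Measure ℝ), IsProbabilityMeasure P' →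
      mean1 P' = q.1 → var1 P' = q.2 → P' (Set.Icc vlo vhi) = 1 →
      ENNReal.ofReal (1 - ε) ≤ P' {v | v + c ≤ 0}})
    (hsub : ∀ᵐ ω ∂QQ, Qset ω ⊆ G)
    (hconf : ENNReal.ofReal (1 - δ) ≤ QQ {ω | (μstar, σ2star) ∈ Qset ω}) :
    ∀ (P : Measure ℝ), IsProbabilityMeasure P → mean1 P = μstar → var1 P = σ2star →
      P (Set.Icc vlo vhi) = 1 →
      ENNReal.ofReal ((1 - ε) * (1 - δ)) ≤ (QQ.prod P) {p | p.2 + c ≤ 0} := by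
  intro P hP hmean hvar hsupp
  have hconf_pos : QQ {ω | (μstar, σ2star) ∈ Qset ω} ≠ 0 :=
    (lt_of_lt_of_le (ENNReal.ofReal_pos.mpr (sub_pos.mpr hδ.2)) hconf).ne'
  have hmem : (μstar, σ2star) ∈ G := mem_of_ae_subset_of_measure_ne_zero hsub hconf_pos
  rw [hG] at hmem
  calc ENNReal.ofReal ((1 - ε) * (1 - δ))
      = ENNReal.ofReal (1 - δ) * ENNReal.ofReal (1 - ε) := by
        rw [mul_comm, ENNReal.ofReal_mul (sub_nonneg.mpr hδ.2.le)]
    _ ≤ QQ {ω | (μstar, σ2star) ∈ Qset ω} * P {v | v + c ≤ 0} :=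
        mul_le_mul' hconf (hmem P hP hmean hvar hsupp)
    _ ≤ (QQ.prod P) {p | p.2 + c ≤ 0} := Measure.mul_le_prod_preimage_snd QQ P _ _

/-- Lemma 2 of the paper: confidence-region argument. -/
theorem stmt3 {Ω : Type*} [MeasurableSpace Ω] (ε δ c μstar σ2star vlo vhi : ℝ)
    (hε : ε ∈ Set.Ioo (0:ℝ) 1) (hδ : δ ∈ Set.Ioo (0:ℝ) 1)
    (hσ : 0 ≤ σ2star) (hv : vlo ≤ vhi)
    (QQ : Measure Ω) [IsProbabilityMeasure QQ] (Qset : Ω → Set (ℝ × ℝ))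
    (G : Set (ℝ × ℝ))
    (hG : G = {q : ℝ × ℝ | ∀ (P' : Measure ℝ), IsProbabilityMeasure P' →
      mean1 P' = q.1 → var1 P' = q.2 → P' (Set.Icc vlo vhi) = 1 →
      ENNReal.ofReal (1 - ε) ≤ P' {v | v + c ≤ 0}})
    (hsub : ∀ᵐ ω ∂QQ, Qset ω ⊆ G)
    (hconf : ENNReal.ofReal (1 - δ) ≤ QQ {ω | (μstar, σ2star) ∈ Qset ω}) :
    ∀ (P : Measure ℝ), IsProbabilityMeasure P → mean1 P = μstar → var1 P = σ2star →
      P (Set.Icc vlo vhi) = 1 →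
      ENNReal.ofReal ((1 - ε) * (1 - δ)) ≤ (QQ.prod P) {p | p.2 + c ≤ 0} :=
  stmt3_general ε δ c μstar σ2star vlo vhi hδ QQ Qset G hG hsub hconf
end
end

section
/- Let α ∈ (0,1), x ∈ ℝⁿ, μ* ∈ ℝⁿ, and let s̲* ≤ s̄* in ℝⁿ (componentwise). Let S* := diag(s̄* − s̲*). If μ*ᵀx + √((1/2)·ln(1/α))·‖S*x‖₂ ≤ 0, then every probability measure P ∈ 𝒫_ind(μ*, s̲*, s̄*) satisfies P{a ∈ ℝⁿ : aᵀx ≤ 0} ≥ 1 − α. -/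
open MeasureTheory

noncomputable section

/-- Euclidean norm on `ℝⁿ`. -/
def euclNorm {n : ℕ} (v : Fin n → ℝ) : ℝ := Real.sqrt (∑ i, (v i) ^ 2)

/-- `P ∈ 𝒫_ind(μ, s̲, s̄)`: `P` is a product measure (the coordinates are
independent under `P`), the `i`-th marginal has mean `μᵢ` and support
contained in `[s̲ᵢ, s̄ᵢ]`. -/
def memPind {n : ℕ} (μ slo shi : Fin n → ℝ) (P : Measure (Fin n → ℝ)) : Prop :=
  ProbabilityTheory.iIndepFun (m := fun _ : Fin n => (inferInstance : MeasurableSpace ℝ))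
    (fun i a => a i) P ∧
  (∀ i, ∫ a, a i ∂P = μ i) ∧
  (∀ i, P {a | a i ∈ Set.Icc (slo i) (shi i)} = 1)

/-! Each summand `xᵢ (aᵢ - μᵢ)` is centred and confined to an interval of length
`|(s̄ᵢ - s̲ᵢ) xᵢ|`, so by Hoeffding's lemma it is sub-Gaussian with variance proxy
`((s̄ᵢ - s̲ᵢ) xᵢ)² / 4`. By independence `aᵀx - μᵀx` is sub-Gaussian with proxy `‖S x‖₂² / 4`, and
the Chernoff bound gives `P {aᵀx > 0} ≤ exp (-2 (μᵀx)² / ‖S x‖₂²)`, which is at most `α` as soon as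
`-μᵀx ≥ √(½ ln (1/α)) ‖S x‖₂`. -/

open Real ProbabilityTheory Finset
open scoped NNReal

lemma euclNorm_sq {n : ℕ} (v : Fin n → ℝ) : euclNorm v ^ 2 = ∑ i, v i ^ 2 :=
  Real.sq_sqrt (sum_nonneg fun i _ => sq_nonneg (v i))

namespace ProbabilityTheory.HasSubgaussianMGF

variable {Ω : Type*} {mΩ : MeasurableSpace Ω} {μ : Measure Ω} {X : Ω → ℝ} {c : ℝ≥0}

lemma measureReal_lt_le [IsFiniteMeasure μ] (h : HasSubgaussianMGF X c μ) {ε α : ℝ}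
    (hα : 0 < α) (hε : √(2 * c * log α⁻¹) ≤ ε) : μ.real {ω | ε < X ω} ≤ α := by
  obtain ⟨hε0, hεc⟩ := Real.sqrt_le_iff.1 hε
  rcases eq_zero_or_pos c with rfl | hc
  · have hsub : {ω | ε < X ω} ⊆ {ω | ¬X ω = (0 : Ω → ℝ) ω} := fun ω hω => (hε0.trans_lt hω).ne'
    have hnull := measure_mono_null hsub (ae_iff.1 h.ae_eq_zero_of_hasSubgaussianMGF_zero)
    simp [measureReal_def, hnull, hα.le]
  · calc μ.real {ω | ε < X ω} ≤ μ.real {ω | ε ≤ X ω} :=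
          measureReal_mono fun ω (hω : ε < X ω) => hω.le
      _ ≤ exp (-ε ^ 2 / (2 * c)) := h.measure_ge_le hε0
      _ ≤ exp (log α) := by
          rw [exp_le_exp, ← neg_neg (log α), ← log_inv, neg_div, neg_le_neg_iff,
            le_div_iff₀ (by positivity)]
          linarith
      _ = α := exp_log hα

end ProbabilityTheory.HasSubgaussianMGF

namespace memPind

variable {n : ℕ} {μ slo shi : Fin n → ℝ} {P : Measure (Fin n → ℝ)} [IsProbabilityMeasure P]

lemma ae_mem_Icc (hP : memPind μ slo shi P) (i : Fin n) :
    ∀ᵐ a ∂P, a i ∈ Set.Icc (slo i) (shi i) := by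
  rw [ae_iff_measure_eq (measurable_pi_apply i measurableSet_Icc).nullMeasurableSet,
    hP.2.2 i, measure_univ]

lemma hasSubgaussianMGF_dotv_sub (hP : memPind μ slo shi P) (x : Fin n → ℝ) :
    HasSubgaussianMGF (fun a => dotv a x - dotv μ x)
      (euclNorm ((Matrix.diagonal (shi - slo)).mulVec x) ^ 2 / 4).toNNReal P := by
  have hcoord : ∀ i, HasSubgaussianMGF (fun a => x i * (a i - μ i))
      ((‖x i‖₊ * (‖shi i - slo i‖₊ / 2)) ^ 2) P := by
    intro i
    convert (hasSubgaussianMGF_of_mem_Icc (measurable_pi_apply i).aemeasurable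
      (hP.ae_mem_Icc i)).const_mul (x i) using 1
    · simp [hP.2.1 i]
    · ext
      change _ = x i ^ 2 * (((‖shi i - slo i‖₊ / 2) ^ 2 : ℝ≥0) : ℝ)
      simp [mul_pow]
  have hind : iIndepFun (fun i a => x i * (a i - μ i)) P :=
    hP.1.comp (fun i y => x i * (y - μ i)) (fun i => by fun_prop)
  have hsum := HasSubgaussianMGF.sum_of_iIndepFun hind (s := univ) fun i _ => hcoord i
  convert hsum using 1
  · ext a
    simp only [dotv, ← sum_sub_distrib]
    exact sum_congr rfl fun i _ => by ring
  · rw [← NNReal.coe_inj, Real.coe_toNNReal _ (by positivity), euclNorm_sq, sum_div]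
    push_cast
    refine sum_congr rfl fun i _ => ?_
    simp only [Matrix.mulVec_diagonal, Pi.sub_apply, Real.norm_eq_abs, mul_pow, div_pow, sq_abs]
    ring

end memPind

theorem stmt6_general {n : ℕ} (α : ℝ) (hα : α ∈ Set.Ioo (0:ℝ) 1)
    (x μstar slostar shistar : Fin n → ℝ)
    (hineq : dotv μstar x + Real.sqrt ((1/2) * Real.log (1 / α)) *
      euclNorm ((Matrix.diagonal (shistar - slostar)).mulVec x) ≤ 0) :
    ∀ (P : Measure (Fin n → ℝ)), IsProbabilityMeasure P →
      memPind μstar slostar shistar P →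
      ENNReal.ofReal (1 - α) ≤ P {a | dotv a x ≤ 0} := by
  intro P _ hP
  set v := (Matrix.diagonal (shistar - slostar)).mulVec x
  have hv : 0 ≤ euclNorm v := sqrt_nonneg _
  have hthreshold : √(2 * (euclNorm v ^ 2 / 4).toNNReal * log α⁻¹) ≤ -dotv μstar x := by
    rw [Real.coe_toNNReal _ (by positivity),
      show 2 * (euclNorm v ^ 2 / 4) * log α⁻¹ = 1 / 2 * log α⁻¹ * euclNorm v ^ 2 by ring,
      sqrt_mul' _ (sq_nonneg _), sqrt_sq hv]
    rw [one_div α] at hineq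
    linarith
  have htail := (hP.hasSubgaussianMGF_dotv_sub x).measureReal_lt_le hα.1 hthreshold
  have hS : MeasurableSet {a : Fin n → ℝ | dotv a x ≤ 0} :=
    measurableSet_le (by unfold dotv; fun_prop) measurable_const
  have hcompl : {a | -dotv μstar x < dotv a x - dotv μstar x} = {a | dotv a x ≤ 0}ᶜ := by
    ext a
    simp
  rw [hcompl, probReal_compl_eq_one_sub hS, measureReal_def] at htail
  rw [ENNReal.ofReal_le_iff_le_toReal (measure_ne_top _ _)]
  linarith

/-- Lemma 3.2 of Calafiore–El Ghaoui, Hoeffding-type bound. -/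
theorem stmt6 {n : ℕ} (α : ℝ) (hα : α ∈ Set.Ioo (0:ℝ) 1)
    (x μstar slostar shistar : Fin n → ℝ) (hs : slostar ≤ shistar)
    (hineq : dotv μstar x + Real.sqrt ((1/2) * Real.log (1 / α)) *
      euclNorm ((Matrix.diagonal (shistar - slostar)).mulVec x) ≤ 0) :
    ∀ (P : Measure (Fin n → ℝ)), IsProbabilityMeasure P →
      memPind μstar slostar shistar P →
      ENNReal.ofReal (1 - α) ≤ P {a | dotv a x ≤ 0} :=
  stmt6_general α hα x μstar slostar shistar hineq
end
end
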